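/- Let K > 0 and δ ∈ (0,1), and let (a_n)_{n∈ℕ} be a sequence of nonnegative reals satisfying a_{n+1} ≤ K·a_n·Σ_{i=0}^{n} a_i for all n ≥ 0. If K·a₀ < 1 and (K·a₀)^{1−δ}/(1 − (K·a₀)^δ) ≤ 1, then the series Σ_{i=0}^{∞} a_i converges, and for every n the partial sum S_n = Σ_{i=0}^{n} a_i satisfies 0 ≤ S_n ≤ Σ_{i=0}^{∞} a_i ≤ a₀/(1 − (K·a₀)^δ). -/
import Mathlib


/-- The Picard-adapted sequence lemma: under the smallness conditions on `K * a 0`,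
the series `∑ aᵢ` converges, with the stated bounds on partial sums and total sum. -/
theorem picard_sequence_summable (K δ : ℝ) (hK : 0 < K) (hδ : δ ∈ Set.Ioo (0:ℝ) 1)
    (a : ℕ → ℝ) (ha : ∀ n, 0 ≤ a n)
    (hrec : ∀ n : ℕ, a (n + 1) ≤ K * a n * ∑ i ∈ Finset.range (n + 1), a i)
    (h1 : K * a 0 < 1)
    (h2 : (K * a 0) ^ ((1:ℝ) - δ) / (1 - (K * a 0) ^ δ) ≤ 1) :
    Summable a ∧
      (∑' i, a i) ≤ a 0 / (1 - (K * a 0) ^ δ) ∧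
      ∀ n : ℕ, 0 ≤ (∑ i ∈ Finset.range (n + 1), a i) ∧
        (∑ i ∈ Finset.range (n + 1), a i) ≤ ∑' i, a i := by
  set q : ℝ := K * a 0 with hqdef
  have hq0 : 0 ≤ q := mul_nonneg hK.le (ha 0)
  set r : ℝ := q ^ δ with hrdef
  have hr0 : 0 ≤ r := Real.rpow_nonneg hq0 δ
  have hr1 : r < 1 := by
    rcases eq_or_lt_of_le hq0 with h | h
    · rw [hrdef, ← h, Real.zero_rpow (ne_of_gt hδ.1)]; norm_num
    · exact Real.rpow_lt_one hq0 h1 hδ.1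
  have h1r : 0 < 1 - r := by linarith
  rcases eq_or_lt_of_le (ha 0) with ha0 | ha0
  · -- a 0 = 0 : everything is zero
    have hz : ∀ n, a n = 0 := by
      intro n
      induction n with
      | zero => exact ha0.symm
      | succ m ihm =>
        have := hrec m
        rw [ihm] at this
        simp at this
        exact le_antisymm this (ha (m + 1))
    have haz : a = fun _ => 0 := funext hz
    subst haz
    refine ⟨summable_zero, ?_, ?_⟩
    · simp only [tsum_zero]
      positivity
    · intro n; simp
  · -- a 0 > 0
    have hqpos : 0 < q := mul_pos hK ha0
    -- from h2 : q^(1-δ) ≤ 1 - r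
    have hkey : q ^ ((1:ℝ) - δ) ≤ 1 - r := by
      have := (div_le_one h1r).mp h2
      exact this
    have hqr : q ≤ r * (1 - r) := by
      have : r * q ^ ((1:ℝ) - δ) = q := by
        rw [hrdef, ← Real.rpow_add hqpos]
        norm_num
      calc q = r * q ^ ((1:ℝ) - δ) := this.symm
        _ ≤ r * (1 - r) := by
            exact mul_le_mul_of_nonneg_left hkey hr0
    have hdivr : q / (1 - r) ≤ r := (div_le_iff₀ h1r).mpr hqr
    -- summable geometric comparison
    have hgeo : Summable (fun n : ℕ => a 0 * r ^ n) :=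
      (summable_geometric_of_lt_one hr0 hr1).mul_left (a 0)
    have hgeosum : ∑' n : ℕ, a 0 * r ^ n = a 0 / (1 - r) := by
      rw [tsum_mul_left, tsum_geometric_of_lt_one hr0 hr1, div_eq_mul_inv]
    have hbound : ∀ n, a n ≤ a 0 * r ^ n := by
      intro n
      induction n using Nat.strong_induction_on with
      | _ n ih =>
        match n with
        | 0 => simp
        | Nat.succ m =>
          have hS : ∑ i ∈ Finset.range (m + 1), a i ≤ a 0 / (1 - r) := by
            calc ∑ i ∈ Finset.range (m + 1), a i
                ≤ ∑ i ∈ Finset.range (m + 1), a 0 * r ^ i := by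
                  exact Finset.sum_le_sum fun i hi =>
                    ih i (Finset.mem_range.mp hi)
              _ ≤ ∑' i : ℕ, a 0 * r ^ i := by
                  exact Summable.sum_le_tsum _ (fun i _ => by positivity) hgeo
              _ = a 0 / (1 - r) := hgeosum
          have hSnn : 0 ≤ ∑ i ∈ Finset.range (m + 1), a i :=
            Finset.sum_nonneg fun i _ => ha i
          calc a (m + 1) ≤ K * a m * ∑ i ∈ Finset.range (m + 1), a i := hrec m
            _ ≤ K * (a 0 * r ^ m) * (a 0 / (1 - r)) := by
                apply mul_le_mul
                · exact mul_le_mul_of_nonneg_left (ih m (Nat.lt_succ_self m)) hK.le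
                · exact hS
                · exact hSnn
                · positivity
            _ = a 0 * r ^ m * (q / (1 - r)) := by
                rw [hqdef]; ring
            _ ≤ a 0 * r ^ m * r := by
                exact mul_le_mul_of_nonneg_left hdivr (by positivity)
            _ = a 0 * r ^ (m + 1) := by ring
    have hsum : Summable a := Summable.of_nonneg_of_le ha hbound hgeo
    refine ⟨hsum, ?_, ?_⟩
    · calc ∑' i, a i ≤ ∑' i : ℕ, a 0 * r ^ i := Summable.tsum_le_tsum hbound hsum hgeo
        _ = a 0 / (1 - r) := hgeosum
    · intro n
      exact ⟨Finset.sum_nonneg fun i _ => ha i,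
        Summable.sum_le_tsum _ (fun i _ => ha i) hsum⟩
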